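/- arXiv:1708.05754 — 3 statements merged into one kernel-verified Lean document; each statement's English description precedes it below -/
import Mathlib

section
/- Let 0 < r < R be real numbers and let f : ℂ → ℂ be analytic on an open set containing the closed ball of radius R centered at 0. Assume f(0) ≠ 0 and that |f(z)| ≤ M for all z with |z| ≤ R, where M > 0. Then the zero set Z = {z : |z| ≤ r and f(z) = 0} is finite and its cardinality satisfies (card Z) · log(R/r) ≤ log(M/|f(0)|). -/
/-!
Jensen's formula bounds the number of zeros of `f` in `closedBall c r`, counted with multiplicity,
by `log (M / ‖f c‖) / log (R / r)` (Mathlib's `AnalyticOnNhd.sum_divisor_le`, stated for `1 ≤ M`;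
dividing `f` by `M` reduces to that case). Since `f c ≠ 0` and the ball is connected, `f` vanishes
to finite order everywhere, so the support of its divisor is exactly the zero set, which is
therefore finite and has at most as many points as the divisor has total degree.
-/

open Metric Set Function MeromorphicOn

theorem AnalyticOnNhd.support_divisor {𝕜 E : Type*} [NontriviallyNormedField 𝕜]
    [NormedAddCommGroup E] [NormedSpace 𝕜 E] {f : 𝕜 → E} {U : Set 𝕜} {x : 𝕜}
    (hf : AnalyticOnNhd 𝕜 f U) (hU : IsPreconnected U) (hx : x ∈ U) (hfx : f x ≠ 0) :
    (divisor f U).support = U ∩ f ⁻¹' {0} := by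
  ext u
  by_cases hu : u ∈ U
  · have hfin : analyticOrderAt f u ≠ ⊤ :=
      analyticOrderAt_ne_top_of_isPreconnected hf hU hx hu
        (by simp [(hf x hx).analyticOrderAt_eq_zero.mpr hfx])
    obtain ⟨n, hn⟩ := ENat.ne_top_iff_exists.mp hfin
    rw [mem_support, MeromorphicOn.AnalyticOnNhd.divisor_apply hf hu, mem_inter_iff,
      mem_preimage, mem_singleton_iff, ← (hf u hu).analyticOrderAt_ne_zero, ← hn]
    simp [hu]
  · simp [hu]

theorem ncard_support_le_finsum_of_nonneg {α : Type*} {D : α → ℤ} (hD : 0 ≤ D)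
    (hfin : D.support.Finite) : (D.support.ncard : ℤ) ≤ ∑ᶠ u, D u := by
  rw [finsum_eq_sum_of_support_subset D hfin.coe_toFinset.ge, ncard_eq_toFinset_card _ hfin]
  simpa using Finset.card_nsmul_le_sum _ _ 1 fun u hu ↦
    Order.one_le_iff_pos.mpr <| lt_of_le_of_ne (hD u) (hfin.mem_toFinset.mp hu).symm

theorem AnalyticOnNhd.ncard_zeros_mul_log_le_of_one_le {c : ℂ} {r R M : ℝ} {f : ℂ → ℂ}
    (hr : 0 < r) (hrR : r < R) (hM : 1 ≤ M) (hf : AnalyticOnNhd ℂ f (closedBall c R))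
    (hfc : f c ≠ 0) (hbd : ∀ z ∈ sphere c R, ‖f z‖ ≤ M) :
    (closedBall c r ∩ f ⁻¹' {0}).Finite ∧
      ((closedBall c r ∩ f ⁻¹' {0}).ncard : ℝ) * Real.log (R / r) ≤ Real.log (M / ‖f c‖) := by
  have hR : 0 < R := hr.trans hrR
  have hfr : AnalyticOnNhd ℂ f (closedBall c r) := hf.mono (closedBall_subset_closedBall hrR.le)
  rw [← hfr.support_divisor (convex_closedBall c r).isPreconnected (mem_closedBall_self hr.le)
    hfc]
  have hfin := (divisor f (closedBall c r)).finiteSupport (isCompact_closedBall c r)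
  have hcount := ncard_support_le_finsum_of_nonneg hfr.divisor_nonneg hfin
  have hjensen := AnalyticOnNhd.sum_divisor_le (r := r) (R := R) (by rwa [abs_of_pos hr])
    (by rwa [abs_of_pos hr, abs_of_pos hR]) hM (by rwa [abs_of_pos hR]) hfc
    (by rwa [abs_of_pos hR])
  rw [abs_of_pos hr] at hjensen
  refine ⟨hfin, ?_⟩
  rw [← le_div_iff₀ (Real.log_pos ((one_lt_div hr).mpr hrR))]
  exact le_trans (by exact_mod_cast hcount) hjensen

theorem AnalyticOnNhd.ncard_zeros_mul_log_le {c : ℂ} {r R M : ℝ} {f : ℂ → ℂ}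
    (hr : 0 < r) (hrR : r < R) (hM : 0 < M) (hf : AnalyticOnNhd ℂ f (closedBall c R))
    (hfc : f c ≠ 0) (hbd : ∀ z ∈ sphere c R, ‖f z‖ ≤ M) :
    (closedBall c r ∩ f ⁻¹' {0}).Finite ∧
      ((closedBall c r ∩ f ⁻¹' {0}).ncard : ℝ) * Real.log (R / r) ≤ Real.log (M / ‖f c‖) := by
  have hM' : (M : ℂ)⁻¹ ≠ 0 := by exact_mod_cast (inv_pos.mpr hM).ne'
  have hzeros : (fun z ↦ (M : ℂ)⁻¹ * f z) ⁻¹' {0} = f ⁻¹' {0} := by ext; simp [hM']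
  have hnorm (z : ℂ) : ‖(M : ℂ)⁻¹ * f z‖ = ‖f z‖ / M := by
    rw [norm_mul, norm_inv, Complex.norm_real, Real.norm_of_nonneg hM.le, inv_mul_eq_div]
  have := ncard_zeros_mul_log_le_of_one_le (f := fun z ↦ (M : ℂ)⁻¹ * f z) hr hrR le_rfl
    (fun z hz ↦ analyticAt_const.mul (hf z hz)) (mul_ne_zero hM' hfc)
    (fun z hz ↦ by rw [hnorm, div_le_one hM]; exact hbd z hz)
  rwa [hzeros, hnorm, one_div_div] at this

theorem jensen_zero_count_general (r R M : ℝ) (hr : 0 < r) (hrR : r < R) (hM : 0 < M)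
    (f : ℂ → ℂ) (U : Set ℂ)
    (hball : Metric.closedBall (0 : ℂ) R ⊆ U)
    (hf : ∀ z ∈ U, AnalyticAt ℂ f z)
    (hf0 : f 0 ≠ 0)
    (hbd : ∀ z ∈ Metric.closedBall (0 : ℂ) R, ‖f z‖ ≤ M) :
    {z : ℂ | ‖z‖ ≤ r ∧ f z = 0}.Finite ∧
      ({z : ℂ | ‖z‖ ≤ r ∧ f z = 0}.ncard : ℝ) * Real.log (R / r)
        ≤ Real.log (M / ‖f 0‖) := by
  have hZ : {z : ℂ | ‖z‖ ≤ r ∧ f z = 0} = closedBall 0 r ∩ f ⁻¹' {0} := by ext; simp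
  rw [hZ]
  exact AnalyticOnNhd.ncard_zeros_mul_log_le hr hrR hM (fun z hz ↦ hf z (hball hz)) hf0
    (fun z hz ↦ hbd z (sphere_subset_closedBall hz))

/-- Jensen-type zero counting bound: if `f` is analytic on an open set containing the
closed ball of radius `R` about `0`, `f 0 ≠ 0`, and `|f| ≤ M` on that ball, then the
set of zeros of `f` in the closed ball of radius `r < R` is finite, and its cardinality
satisfies `card · log (R/r) ≤ log (M / |f 0|)`. -/
theorem jensen_zero_count (r R M : ℝ) (hr : 0 < r) (hrR : r < R) (hM : 0 < M)
    (f : ℂ → ℂ) (U : Set ℂ) (hU : IsOpen U)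
    (hball : Metric.closedBall (0 : ℂ) R ⊆ U)
    (hf : ∀ z ∈ U, AnalyticAt ℂ f z)
    (hf0 : f 0 ≠ 0)
    (hbd : ∀ z ∈ Metric.closedBall (0 : ℂ) R, ‖f z‖ ≤ M) :
    {z : ℂ | ‖z‖ ≤ r ∧ f z = 0}.Finite ∧
      ({z : ℂ | ‖z‖ ≤ r ∧ f z = 0}.ncard : ℝ) * Real.log (R / r)
        ≤ Real.log (M / ‖f 0‖) :=
  jensen_zero_count_general r R M hr hrR hM f U hball hf hf0 hbd
end

section
/- Let 0 < ε₁ < ε₂ and let λ > 0, C ≥ 0 be real numbers. Let f : ℂ → ℂ be continuous and bounded on the closed strip {z : 0 ≤ Im z ≤ ε₂} and holomorphic on its interior. Assume |f(z)| ≤ exp(2ε₂λ) for every z with Im z = ε₂, and that there exists z₁ with Im z₁ = ε₁ and |f(z₁)| ≥ exp(−Cλ). Then the supremum of |f| over the real line {z : Im z = 0} is at least exp(−λ·ε₂·(C + 2ε₁)/(ε₂ − ε₁)). -/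
/-!
Rotating Hadamard's three-line theorem onto the strip `0 ≤ Im z ≤ ε₂` and evaluating it at `z₁`,
with `t = ε₁ / ε₂` and `S` the supremum of `‖f‖` on the real line, gives
`exp (-C λ) ≤ ‖f z₁‖ ≤ S ^ (1 - t) * exp (2 ε₂ λ) ^ t = S ^ (1 - t) * exp (2 ε₁ λ)`;
solving for `S` gives the bound.
-/

open Complex HadamardThreeLines Set

theorem norm_le_interp_of_mem_horizontalClosedStrip {E : Type*} [NormedAddCommGroup E]
    [NormedSpace ℂ E] {f : ℂ → E} {z : ℂ} {a b l u : ℝ} (hul : l < u) (hz : z ∈ im ⁻¹' Icc l u)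
    (hd : DiffContOnCl ℂ f (im ⁻¹' Ioo l u)) (hB : BddAbove ((norm ∘ f) '' (im ⁻¹' Icc l u)))
    (ha : ∀ z ∈ im ⁻¹' {l}, ‖f z‖ ≤ a) (hb : ∀ z ∈ im ⁻¹' {u}, ‖f z‖ ≤ b) :
    ‖f z‖ ≤ a ^ (1 - (z.im - l) / (u - l)) * b ^ ((z.im - l) / (u - l)) := by
  have hrot : ∀ (S : Set ℝ) (w : ℂ), w ∈ re ⁻¹' S → I * w ∈ im ⁻¹' S := fun S w hw => by
    simpa using hw
  have hvert := norm_le_interp_of_mem_verticalClosedStrip' (f := fun w => f (I * w))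
    (z := -I * z) hul (by simpa [verticalClosedStrip] using hz)
    (hd.comp (differentiable_id.const_mul I).diffContOnCl (hrot _))
    (hB.mono <| by rintro _ ⟨w, hw, rfl⟩; exact ⟨I * w, hrot _ w hw, rfl⟩)
    (fun w hw => ha _ (hrot _ w hw)) (fun w hw => hb _ (hrot _ w hw))
  simpa [← mul_assoc] using hvert

theorem Real.exp_div_le_of_exp_le_rpow {x s S : ℝ} (hS : 0 ≤ S) (hs : 0 < s)
    (h : Real.exp x ≤ S ^ s) : Real.exp (x / s) ≤ S := by
  rwa [div_eq_mul_inv, Real.exp_mul, Real.rpow_inv_le_iff_of_pos (Real.exp_pos x).le hS hs]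

theorem three_lines_lower_bound_general (ε₁ ε₂ lam C : ℝ)
    (hε₁ : 0 < ε₁) (hε : ε₁ < ε₂)
    (f : ℂ → ℂ)
    (hcont : ContinuousOn f {z : ℂ | 0 ≤ z.im ∧ z.im ≤ ε₂})
    (hbdd : BddAbove ((fun z => ‖f z‖) '' {z : ℂ | 0 ≤ z.im ∧ z.im ≤ ε₂}))
    (hdiff : DifferentiableOn ℂ f {z : ℂ | 0 < z.im ∧ z.im < ε₂})
    (hupper : ∀ z : ℂ, z.im = ε₂ → ‖f z‖ ≤ Real.exp (2 * ε₂ * lam))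
    (hpt : ∃ z₁ : ℂ, z₁.im = ε₁ ∧ Real.exp (-C * lam) ≤ ‖f z₁‖) :
    Real.exp (-(lam * ε₂ * (C + 2 * ε₁) / (ε₂ - ε₁)))
      ≤ sSup ((fun z => ‖f z‖) '' {z : ℂ | z.im = 0}) := by
  obtain ⟨z₁, hz₁, hlow⟩ := hpt
  have hε₂ : 0 < ε₂ := hε₁.trans hε
  set S := sSup ((fun z => ‖f z‖) '' {z : ℂ | z.im = 0})
  have hS : 0 ≤ S := Real.sSup_nonneg (by rintro _ ⟨z, -, rfl⟩; exact norm_nonneg _)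
  have hreal : ∀ z ∈ im ⁻¹' {0}, ‖f z‖ ≤ S := fun z hz =>
    le_csSup (hbdd.mono <| image_mono fun w (hw : w.im = 0) =>
      show 0 ≤ w.im ∧ w.im ≤ ε₂ from ⟨hw.ge, hw ▸ hε₂.le⟩) (mem_image_of_mem _ hz)
  have hclosure : closure (im ⁻¹' Ioo 0 ε₂) = im ⁻¹' Icc 0 ε₂ := by
    rw [closure_preimage_im, closure_Ioo hε₂.ne]
  have hthree := norm_le_interp_of_mem_horizontalClosedStrip hε₂ (z := z₁)
    (show z₁.im ∈ Icc 0 ε₂ from hz₁ ▸ ⟨hε₁.le, hε.le⟩) ⟨hdiff, hclosure ▸ hcont⟩ hbdd hreal hupper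
  rw [hz₁, sub_zero, sub_zero, ← Real.exp_mul,
    show 2 * ε₂ * lam * (ε₁ / ε₂) = 2 * ε₁ * lam by field_simp] at hthree
  have hrpow : Real.exp (-(C + 2 * ε₁) * lam) ≤ S ^ (1 - ε₁ / ε₂) := by
    rw [show -(C + 2 * ε₁) * lam = -C * lam - 2 * ε₁ * lam by ring, Real.exp_sub,
      div_le_iff₀ (Real.exp_pos _)]
    exact hlow.trans hthree
  calc Real.exp (-(lam * ε₂ * (C + 2 * ε₁) / (ε₂ - ε₁)))
      = Real.exp (-(C + 2 * ε₁) * lam / (1 - ε₁ / ε₂)) := by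
        congr 1
        field_simp [(sub_pos.2 hε).ne']
    _ ≤ S := Real.exp_div_le_of_exp_le_rpow hS
        (sub_pos.2 ((div_lt_one hε₂).2 hε)) hrpow

/-- Hadamard three-lines argument: if `f` is continuous and bounded on the closed strip
`0 ≤ Im z ≤ ε₂`, holomorphic on its interior, satisfies `|f| ≤ exp (2 ε₂ λ)` on the line
`Im z = ε₂`, and `|f z₁| ≥ exp (-C λ)` at some point `z₁` with `Im z₁ = ε₁`, then the
supremum of `|f|` over the real line is at least `exp (-λ ε₂ (C + 2 ε₁)/(ε₂ - ε₁))`. -/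
theorem three_lines_lower_bound (ε₁ ε₂ lam C : ℝ)
    (hε₁ : 0 < ε₁) (hε : ε₁ < ε₂) (hlam : 0 < lam) (hC : 0 ≤ C)
    (f : ℂ → ℂ)
    (hcont : ContinuousOn f {z : ℂ | 0 ≤ z.im ∧ z.im ≤ ε₂})
    (hbdd : BddAbove ((fun z => ‖f z‖) '' {z : ℂ | 0 ≤ z.im ∧ z.im ≤ ε₂}))
    (hdiff : DifferentiableOn ℂ f {z : ℂ | 0 < z.im ∧ z.im < ε₂})
    (hupper : ∀ z : ℂ, z.im = ε₂ → ‖f z‖ ≤ Real.exp (2 * ε₂ * lam))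
    (hpt : ∃ z₁ : ℂ, z₁.im = ε₁ ∧ Real.exp (-C * lam) ≤ ‖f z₁‖) :
    Real.exp (-(lam * ε₂ * (C + 2 * ε₁) / (ε₂ - ε₁)))
      ≤ sSup ((fun z => ‖f z‖) '' {z : ℂ | z.im = 0}) :=
  three_lines_lower_bound_general ε₁ ε₂ lam C hε₁ hε f hcont hbdd hdiff hupper hpt
end

section
/- Let X be a compact metric space, let μ and ν_j (j ∈ ℕ) be Borel probability measures on X, and assume that for every continuous function f : X → ℝ one has (1/N) · Σ_{j<N} ∫ f dν_j → ∫ f dμ as N → ∞. Let Γ ⊆ X be a closed set with μ(Γ) = 0, and let S ⊆ ℕ be an infinite set such that for every open set V ⊇ Γ, (1/#(S ∩ {0,…,N−1})) · Σ_{j ∈ S, j < N} ν_j(X \ V) → 0 as N → ∞. Then the upper natural density of S equals 0. -/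
open MeasureTheory Filter Topology Set

/-!
Fix `η > 0`. Outer regularity and Urysohn's lemma give a continuous `0 ≤ f ≤ 1` with `f = 1`
on `Γ` and `∫ f dμ < η / 4`. On the open neighbourhood `W = {f > 1/2}` of `Γ` we have
`ν j W ≤ 2 ∫ f dν j`, so summing over `j ∈ S`, `j < N` gives
`#(S ∩ [0, N)) - ∑_{j ∈ S, j < N} ν j Wᶜ ≤ 2 ∑_{j < N} ∫ f dν j`. The concentration hypothesis
makes the subtracted sum at most half of `#(S ∩ [0, N))` eventually, and the Cesàro hypothesis
makes the right-hand side smaller than `η N / 2` eventually; hence `#(S ∩ [0, N)) / N < η`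
eventually.
-/

theorem Set.Nonempty.eventually_ncard_inter_Iio_pos {S : Set ℕ} (hS : S.Nonempty) :
    ∀ᶠ N in atTop, 0 < (S ∩ Iio N).ncard := by
  obtain ⟨n, hn⟩ := hS
  filter_upwards [eventually_gt_atTop n] with N hN
  exact (ncard_pos ((finite_Iio N).inter_of_right S)).mpr ⟨n, hn, hN⟩

theorem Set.ncard_inter_Iio_eq_sum_indicator (S : Set ℕ) (N : ℕ) :
    ((S ∩ Iio N).ncard : ℝ) = ∑ j ∈ Finset.range N, S.indicator (fun _ => (1 : ℝ)) j := by
  classical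
  have hS : S ∩ Iio N = ↑((Finset.range N).filter (· ∈ S)) := by
    ext j
    simp [and_comm]
  rw [hS, ncard_coe_finset, Finset.sum_indicator_eq_sum_filter]
  simp

theorem eventually_div_lt_of_sub_le_two_mul {c T F : ℕ → ℝ} {L : ℝ}
    (hc : ∀ᶠ N in atTop, 0 < c N) (hT : Tendsto (fun N => T N / c N) atTop (𝓝 0))
    (hF : ∀ᶠ N in atTop, F N / N < L) (hle : ∀ N, c N - T N ≤ 2 * F N) :
    ∀ᶠ N in atTop, c N / N < 4 * L := by
  filter_upwards [hc, hT.eventually_lt_const one_half_pos, hF, eventually_gt_atTop 0]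
    with N hcN hTN hFN hN
  have hN : (0 : ℝ) < N := Nat.cast_pos.mpr hN
  rw [div_lt_iff₀ hcN] at hTN
  rw [div_lt_iff₀ hN] at hFN ⊢
  linarith [hle N]

theorem exists_continuous_eqOn_one_integral_lt {X : Type*} [TopologicalSpace X] [NormalSpace X]
    [MeasurableSpace X] [OpensMeasurableSpace X] (μ : Measure X) [IsFiniteMeasure μ]
    [μ.OuterRegular] {Γ : Set X} (hΓ : IsClosed Γ) (hμΓ : μ Γ = 0) {ε : ℝ} (hε : 0 < ε) :
    ∃ f : C(X, ℝ), (∀ x, f x ∈ Icc 0 1) ∧ EqOn f 1 Γ ∧ ∫ x, f x ∂μ < ε := by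
  obtain ⟨V, hΓV, hV, hμV⟩ :=
    Set.exists_isOpen_lt_of_lt (μ := μ) Γ (ENNReal.ofReal ε) (hμΓ ▸ ENNReal.ofReal_pos.mpr hε)
  obtain ⟨f, hf0, hf1, hf01⟩ := exists_continuous_zero_one_of_isClosed hV.isClosed_compl hΓ
    (disjoint_compl_left_iff_subset.mpr hΓV)
  refine ⟨f, hf01, hf1, ?_⟩
  have hf_le : ∀ x, f x ≤ V.indicator 1 x := fun x => by
    by_cases hx : x ∈ V
    · simpa [hx] using (hf01 x).2
    · simp [hx, hf0 hx]
  calc ∫ x, f x ∂μ ≤ ∫ x, V.indicator 1 x ∂μ :=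
        integral_mono_of_nonneg (.of_forall fun x => (hf01 x).1)
          ((integrable_const 1).indicator hV.measurableSet) (.of_forall hf_le)
    _ = μ.real V := by simp [integral_indicator_one hV.measurableSet]
    _ < ε := ENNReal.toReal_lt_of_lt_ofReal hμV

theorem smul_measureReal_le_integral_of_le_on {X : Type*} [MeasurableSpace X] {ν : Measure X}
    [IsFiniteMeasure ν] {f : X → ℝ} (hf : Integrable f ν) (hf0 : 0 ≤ f) {W : Set X}
    (hW : MeasurableSet W) {t : ℝ} (htf : ∀ x ∈ W, t ≤ f x) : t * ν.real W ≤ ∫ x, f x ∂ν := by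
  have hle : ∀ x, W.indicator (fun _ => t) x ≤ f x := fun x => by
    by_cases hx : x ∈ W
    · simpa [hx] using htf x hx
    · simpa [hx] using hf0 x
  calc t * ν.real W = ∫ x, W.indicator (fun _ => t) x ∂ν := by
        rw [integral_indicator_const t hW, smul_eq_mul, mul_comm]
    _ ≤ ∫ x, f x ∂ν := integral_mono ((integrable_const t).indicator hW) hf hle

theorem ncard_inter_Iio_sub_le_two_mul_sum_integral {X : Type*} [MeasurableSpace X]
    {ν : ℕ → Measure X} [∀ j, IsProbabilityMeasure (ν j)] {f : X → ℝ}
    (hf : ∀ j, Integrable f (ν j)) (hf0 : 0 ≤ f) {W : Set X} (hW : MeasurableSet W)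
    (hfW : ∀ x ∈ W, 1 / 2 ≤ f x) (S : Set ℕ) (N : ℕ) :
    ((S ∩ Iio N).ncard : ℝ) - ∑ j ∈ Finset.range N, S.indicator (fun i => (ν i).real Wᶜ) j ≤
      2 * ∑ j ∈ Finset.range N, ∫ x, f x ∂(ν j) := by
  rw [ncard_inter_Iio_eq_sum_indicator, ← Finset.sum_sub_distrib, Finset.mul_sum]
  refine Finset.sum_le_sum fun j _ => ?_
  have hνW := smul_measureReal_le_integral_of_le_on (hf j) hf0 hW hfW
  by_cases hj : j ∈ S
  · rw [indicator_of_mem hj, indicator_of_mem hj, probReal_compl_eq_one_sub hW]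
    linarith
  · rw [indicator_of_notMem hj, indicator_of_notMem hj, sub_zero]
    linarith [integral_nonneg hf0 (μ := ν j)]

/-- Mass concentration on a null set forces density zero: let `μ`, `ν j` be Borel
probability measures on a compact metric space whose Cesàro averages of the `ν j`
converge weakly to `μ`, let `Γ` be closed with `μ Γ = 0`, and let `S ⊆ ℕ` be an infinite
set such that for every open `V ⊇ Γ` the Cesàro averages over `S` of `ν j (Vᶜ)` tend to
zero. Then the upper natural density of `S` is zero. -/
theorem density_zero_of_concentration {X : Type*} [MetricSpace X] [CompactSpace X]
    [MeasurableSpace X] [BorelSpace X]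
    (μ : Measure X) (ν : ℕ → Measure X)
    [IsProbabilityMeasure μ] [∀ j, IsProbabilityMeasure (ν j)]
    (hconv : ∀ f : C(X, ℝ), Filter.Tendsto
      (fun N => (∑ j ∈ Finset.range N, ∫ x, f x ∂(ν j)) / N) Filter.atTop
      (nhds (∫ x, f x ∂μ)))
    (Γ : Set X) (hΓ : IsClosed Γ) (hμΓ : μ Γ = 0)
    (S : Set ℕ) (hS : S.Infinite)
    (hconc : ∀ V : Set X, IsOpen V → Γ ⊆ V →
      Filter.Tendsto
        (fun N => (∑ j ∈ Finset.range N, S.indicator (fun i => ((ν i) Vᶜ).toReal) j)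
          / ((S ∩ Set.Iio N).ncard : ℝ)) Filter.atTop (nhds 0)) :
    Filter.limsup (fun N => ((S ∩ Set.Iio N).ncard : ℝ) / N) Filter.atTop = 0 := by
  refine Tendsto.limsup_eq (tendsto_order.2 ⟨fun a ha => .of_forall fun N => ha.trans_le
    (by positivity), fun η hη => ?_⟩)
  obtain ⟨f, hf01, hfΓ, hfμ⟩ := exists_continuous_eqOn_one_integral_lt μ hΓ hμΓ
    (div_pos hη four_pos)
  set W := f ⁻¹' Ioi (1 / 2)
  have hW : IsOpen W := isOpen_Ioi.preimage f.continuous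
  have hΓW : Γ ⊆ W := fun x hx => by norm_num [W, hfΓ hx]
  have hle := ncard_inter_Iio_sub_le_two_mul_sum_integral (ν := ν)
    (fun _ => f.continuous.integrable_of_hasCompactSupport (.of_compactSpace f))
    (fun x => (hf01 x).1) hW.measurableSet (fun _ hx => le_of_lt hx) S
  have hF := (hconv f).eventually_lt_const hfμ
  have hc := hS.nonempty.eventually_ncard_inter_Iio_pos.mono
    fun N hN => (Nat.cast_pos (α := ℝ)).mpr hN
  simpa [mul_div_cancel₀] using
    eventually_div_lt_of_sub_le_two_mul hc (hconc W hW hΓW) hF hle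
end
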